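/- Let Λ be a singular hyperbolic attractor of a C² vector field X, and let μ be an ergodic invariant measure supported on Λ but not on the set of singularities. Then μ has no zero Lyapunov exponent in F^{cu} transverse to the flow: there is no vector v ∈ F^{cu}(x) \ ⟨X(x)⟩ at a μ-generic regular point x whose Lyapunov exponent is zero. Indeed, if v had zero exponent, the sectional expansion of the plane spanned by X(x) and v would force the area to grow exponentially, contradicting that both spanning vectors have zero exponent. -/

import Mathlib

open MeasureTheory Filter Topology Metric
open scoped ENNReal

noncomputable section

/-- Points of the ambient manifold, modelled as `d`-dimensional Euclidean space. -/
abbrev Pt (d : ℕ) := EuclideanSpace ℝ (Fin d)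

variable {d : ℕ}

/-- The (unsigned) area of the parallelogram spanned by two vectors. -/
noncomputable def pArea (v w : Pt d) : ℝ :=
  Real.sqrt (‖v‖ ^ 2 * ‖w‖ ^ 2 - (inner ℝ v w : ℝ) ^ 2)

/-- The absolute value of the Jacobian (volume-expansion factor) of a linear map
restricted to a subspace `V`, computed via the Gram determinant. -/
noncomputable def jacOn (A : Pt d →L[ℝ] Pt d) (V : Submodule ℝ (Pt d)) : ℝ :=
  Real.sqrt (LinearMap.det
    ((LinearMap.adjoint ((A : Pt d →ₗ[ℝ] Pt d).comp V.subtype)).comp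
      ((A : Pt d →ₗ[ℝ] Pt d).comp V.subtype)))

/-- The vector field generating a flow `φ`. -/
noncomputable def Xof (φ : ℝ → Pt d → Pt d) (x : Pt d) : Pt d :=
  deriv (fun t => φ t x) 0

/-- Kolmogorov–Sinai (metric) entropy of a map `f` with respect to a measure `μ`:
supremum over finite measurable partitions (coded by measurable maps into `Fin (n+1)`)
of the asymptotic mean Shannon entropy of dynamical refinements. -/
noncomputable def metricEntropy {M : Type*} [MeasurableSpace M] (f : M → M) (μ : Measure M) : ℝ :=
  ⨆ (n : ℕ) (α : {g : M → Fin (n + 1) // Measurable g}),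
    Filter.atTop.liminf (fun m : ℕ =>
      (∑ s : Fin m → Fin (n + 1),
        Real.negMulLog ((μ {x | ∀ k : Fin m, (α : M → Fin (n + 1)) (f^[(k : ℕ)] x) = s k}).toReal))
        / m)

/-- The (upper) Lyapunov exponent of the vector `v` at the point `x` for the map `f`. -/
noncomputable def lyapSup (f : Pt d → Pt d) (x v : Pt d) : ℝ :=
  Filter.atTop.limsup (fun n : ℕ => Real.log ‖fderiv ℝ (f^[n]) x v‖ / n)

/-- The (lower) Lyapunov exponent of the vector `v` at the point `x` for the map `f`. -/
noncomputable def lyapInf (f : Pt d → Pt d) (x v : Pt d) : ℝ :=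
  Filter.atTop.liminf (fun n : ℕ => Real.log ‖fderiv ℝ (f^[n]) x v‖ / n)

/-- The sum of the positive Lyapunov exponents at a point: the exponential growth rate of
the maximal volume expansion of `Df^n` over all subspaces. -/
noncomputable def sumPosLyapAt (f : Pt d → Pt d) (x : Pt d) : ℝ :=
  Filter.atTop.limsup (fun n : ℕ =>
    Real.log (⨆ V : Submodule ℝ (Pt d), jacOn (fderiv ℝ (f^[n]) x) V) / n)

/-- The sum of the positive Lyapunov exponents of an (ergodic) measure, counted with
multiplicity. -/
noncomputable def sumPosLyap (f : Pt d → Pt d) (μ : Measure (Pt d)) : ℝ :=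
  ∫ x, sumPosLyapAt f x ∂μ

/-- The (Pesin) unstable set of `x` for an invertible map with inverse `g`: points whose
backward orbit approaches that of `x` exponentially fast. -/
def unstableSet (g : Pt d → Pt d) (x : Pt d) : Set (Pt d) :=
  {y | ∃ K > (0 : ℝ), ∃ c > (0 : ℝ), ∀ n : ℕ, dist (g^[n] y) (g^[n] x) ≤ K * Real.exp (-c * n)}

/-- `x` is forward generic for `μ` and `f`: Birkhoff averages along the forward orbit of `x`
converge weakly-* to `μ`. -/
def ForwardGeneric (f : Pt d → Pt d) (μ : Measure (Pt d)) (x : Pt d) : Prop :=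
  ∀ g : BoundedContinuousFunction (Pt d) ℝ,
    Tendsto (fun n : ℕ => (∑ i ∈ Finset.range n, g (f^[i] x)) / n) atTop (𝓝 (∫ y, g y ∂μ))

/-- `μ` is a physical measure for `f`: its basin of forward generic points has positive
Lebesgue measure. -/
def IsPhysical (f : Pt d → Pt d) (μ : Measure (Pt d)) : Prop :=
  0 < volume {x : Pt d | ForwardGeneric f μ x}

/-- SRB measure for an invertible map `f` with inverse `g`: an invariant probability measure
with a positive Lyapunov exponent almost everywhere, whose conditional measures on unstable
manifolds (along some measurable partition subordinate to the unstable lamination, with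
disintegration kernel `ρ`) are absolutely continuous with respect to the induced
(`k`-dimensional Hausdorff) volume on the unstable manifolds. -/
structure IsSRBFor (f g : Pt d → Pt d) (μ : Measure (Pt d)) : Prop where
  prob : IsProbabilityMeasure μ
  inv : MeasurePreserving f μ μ
  posLyap : ∀ᵐ x ∂μ, ∃ v : Pt d, v ≠ 0 ∧ 0 < lyapSup f x v
  absCont : ∃ (k : ℕ) (π : Pt d → Pt d) (ρ : ProbabilityTheory.Kernel (Pt d) (Pt d)),
    Measurable π ∧
    (∀ A : Set (Pt d), MeasurableSet A → μ A = ∫⁻ s, ρ s A ∂(μ.map π)) ∧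
    (∀ᵐ x ∂μ,
      π ⁻¹' {π x} ⊆ unstableSet g x ∧
      (∃ ε > (0 : ℝ), unstableSet g x ∩ Metric.ball x ε ⊆ π ⁻¹' {π x}) ∧
      ρ (π x) ≪ (Measure.hausdorffMeasure (k : ℝ) : Measure (Pt d)).restrict (π ⁻¹' {π x}))

/-- A singular hyperbolic attractor of a `C²` vector field (given by its flow `φ`) on
`d`-dimensional space: a compact invariant transitive topological attractor `Λ` containing
a singularity, carrying a continuous invariant splitting `E^{ss} ⊕ F^{cu}` which is
dominated, with `E^{ss}` uniformly contracted and `F^{cu}` sectionally expanded. -/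
structure SingularHyperbolicAttractor (d : ℕ) where
  /-- the flow -/
  φ : ℝ → Pt d → Pt d
  flow_zero : ∀ x, φ 0 x = x
  flow_add : ∀ s t x, φ (s + t) x = φ s (φ t x)
  /-- the vector field is `C²`, i.e. the flow is `C²` -/
  flow_smooth : ContDiff ℝ 2 (Function.uncurry φ)
  /-- the attractor -/
  Λ : Set (Pt d)
  compactΛ : IsCompact Λ
  invariantΛ : ∀ t, φ t '' Λ = Λ
  /-- `Λ` is a topological attractor -/
  attracting : ∃ U : Set (Pt d), IsOpen U ∧ Λ ⊆ U ∧
    (⋂ t ∈ Set.Ici (0 : ℝ), φ t '' closure U) = Λ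
  /-- transitivity: some point has a dense forward orbit in `Λ` -/
  transitive : ∃ x ∈ Λ, Λ ⊆ closure (⋃ t ∈ Set.Ici (0 : ℝ), {φ t x})
  /-- `Λ` contains a singularity -/
  exists_sing : ∃ σ ∈ Λ, Xof φ σ = 0
  /-- the strong stable bundle -/
  Ess : Pt d → Submodule ℝ (Pt d)
  /-- the sectionally expanded center-unstable bundle -/
  Fcu : Pt d → Submodule ℝ (Pt d)
  isCompl : ∀ x ∈ Λ, IsCompl (Ess x) (Fcu x)
  /-- continuity of the splitting, via the projection onto `Ess` along `Fcu` -/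
  proj : Pt d → Pt d →L[ℝ] Pt d
  proj_cont : ContinuousOn proj Λ
  proj_idem : ∀ x ∈ Λ, (proj x).comp (proj x) = proj x
  proj_range : ∀ x ∈ Λ, LinearMap.range (proj x : Pt d →ₗ[ℝ] Pt d) = Ess x
  proj_ker : ∀ x ∈ Λ, LinearMap.ker (proj x : Pt d →ₗ[ℝ] Pt d) = Fcu x
  /-- invariance of the splitting under the derivative cocycle -/
  inv_Ess : ∀ x ∈ Λ, ∀ t : ℝ,
    (Ess x).map (fderiv ℝ (φ t) x : Pt d →ₗ[ℝ] Pt d) = Ess (φ t x)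
  inv_Fcu : ∀ x ∈ Λ, ∀ t : ℝ,
    (Fcu x).map (fderiv ℝ (φ t) x : Pt d →ₗ[ℝ] Pt d) = Fcu (φ t x)
  /-- the constants of singular hyperbolicity -/
  C : ℝ
  lam : ℝ
  C_pos : 0 < C
  lam_pos : 0 < lam
  /-- domination -/
  domination : ∀ x ∈ Λ, ∀ t > (0 : ℝ), ∀ v ∈ Ess x, ∀ w ∈ Fcu (φ t x),
    ‖fderiv ℝ (φ t) x v‖ * ‖fderiv ℝ (φ (-t)) (φ t x) w‖ ≤
      C * Real.exp (-lam * t) * ‖v‖ * ‖w‖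
  /-- uniform contraction of `Ess` -/
  contraction : ∀ x ∈ Λ, ∀ t > (0 : ℝ), ∀ v ∈ Ess x,
    ‖fderiv ℝ (φ t) x v‖ ≤ C * Real.exp (-lam * t) * ‖v‖
  /-- `Fcu` contains two non-collinear vectors -/
  fcu_dim : ∀ x ∈ Λ, 2 ≤ Module.finrank ℝ (Fcu x)
  /-- sectional expansion of `Fcu` -/
  sectional : ∀ x ∈ Λ, ∀ t > (0 : ℝ), ∀ v ∈ Fcu x, ∀ w ∈ Fcu x,
    LinearIndependent ℝ ![v, w] →
    C * Real.exp (lam * t) * pArea v w ≤ pArea (fderiv ℝ (φ t) x v) (fderiv ℝ (φ t) x w)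

namespace SingularHyperbolicAttractor

variable (D : SingularHyperbolicAttractor d)

/-- The time-one map of the flow. -/
noncomputable def f : Pt d → Pt d := D.φ 1

/-- The set of singularities of the vector field inside `Λ`. -/
def Sing : Set (Pt d) := {x | x ∈ D.Λ ∧ Xof D.φ x = 0}

/-- The potential `V = -log |det Df|_{F^{cu}}|`. -/
noncomputable def Vfun (x : Pt d) : ℝ :=
  - Real.log (jacOn (fderiv ℝ (D.φ 1) x) (D.Fcu x))

/-- SRB measure for (the time-one map of) the flow of the attractor. -/
def IsSRB (μ : Measure (Pt d)) : Prop := IsSRBFor (D.φ 1) (D.φ (-1)) μ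

/-- Topological pressure of a potential `ψ` on the attractor, defined by the variational
principle over ergodic invariant probability measures supported on `Λ`. -/
noncomputable def pressure (ψ : Pt d → ℝ) : ℝ :=
  sSup {r : ℝ | ∃ ν : Measure (Pt d), Ergodic (D.φ 1) ν ∧ IsProbabilityMeasure ν ∧
    ν D.Λᶜ = 0 ∧ r = metricEntropy (D.φ 1) ν + ∫ x, ψ x ∂ν}

/-- Equilibrium state for the potential `ψ`: an invariant probability measure supported on
`Λ` realizing the pressure. -/
def IsEquilibriumState (ψ : Pt d → ℝ) (μ : Measure (Pt d)) : Prop :=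
  IsProbabilityMeasure μ ∧ MeasurePreserving (D.φ 1) μ μ ∧ μ D.Λᶜ = 0 ∧
    metricEntropy (D.φ 1) μ + ∫ x, ψ x ∂μ = D.pressure ψ

end SingularHyperbolicAttractor

/-- The `(n,ε)`-Bowen ball centered at `x`. -/
def bowenBall (f : Pt d → Pt d) (n : ℕ) (ε : ℝ) (x : Pt d) : Set (Pt d) :=
  {y | ∀ i < n, dist (f^[i] x) (f^[i] y) < ε}

/-- The topological support of a measure. -/
def msupport (μ : Measure (Pt d)) : Set (Pt d) := {x | ∀ U ∈ 𝓝 x, 0 < μ U}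

end

/-!
The flow direction lies in `F^{cu}`: pulled back by `φ (-t)`, an `E^{ss}` component of `X(x)`
would grow like `e^{λt}` and, by domination, outgrow the `F^{cu}` component, while `X` stays
bounded on the compact set `Λ`. So for `v ∈ F^{cu}(x)` not collinear with `X(x)`, sectional
expansion of the plane spanned by `v` and `X(x)` gives
`C e^{λn} area(v, X(x)) ≤ ‖Dφₙ v‖ ‖X(φₙ x)‖ ≤ M ‖Dφₙ v‖`,
so the exponent of `v` is at least `λ > 0`.
-/

section FlowDerivative

variable {d : ℕ} {φ : ℝ → Pt d → Pt d}

theorem hasDerivAt_Xof (hφ : Differentiable ℝ (Function.uncurry φ)) (x : Pt d) :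
    HasDerivAt (fun t => φ t x) (Xof φ x) 0 :=
  ((hφ.comp (differentiable_id.prodMk (differentiable_const x))) 0).hasDerivAt

theorem Xof_eq_fderiv_uncurry_apply (hφ : Differentiable ℝ (Function.uncurry φ)) (x : Pt d) :
    Xof φ x = fderiv ℝ (Function.uncurry φ) (0, x) (1, 0) :=
  (hasDerivAt_Xof hφ x).unique <|
    (hφ (0, x)).hasFDerivAt.comp_hasDerivAt (x := (0 : ℝ)) (f := fun t => (t, x))
      ((hasDerivAt_id 0).prodMk (hasDerivAt_const 0 x))

theorem continuous_Xof (hφ : ContDiff ℝ 1 (Function.uncurry φ)) : Continuous (Xof φ) := by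
  have hfderiv : Continuous fun x : Pt d => fderiv ℝ (Function.uncurry φ) (0, x) :=
    (hφ.continuous_fderiv one_ne_zero).comp (continuous_const.prodMk continuous_id)
  rw [show Xof φ = _ from funext (Xof_eq_fderiv_uncurry_apply (hφ.differentiable one_ne_zero))]
  exact hfderiv.clm_apply continuous_const

theorem differentiable_apply_of_uncurry (hφ : Differentiable ℝ (Function.uncurry φ)) (t : ℝ) :
    Differentiable ℝ (φ t) :=
  hφ.comp ((differentiable_const t).prodMk differentiable_id)

theorem Xof_apply_flow (hzero : ∀ x, φ 0 x = x) (hadd : ∀ s t x, φ (s + t) x = φ s (φ t x))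
    (hφ : Differentiable ℝ (Function.uncurry φ)) (t : ℝ) (x : Pt d) :
    Xof φ (φ t x) = fderiv ℝ (φ t) x (Xof φ x) := by
  have hcomm : (fun s => φ s (φ t x)) = fun s => φ t (φ s x) := by
    funext s
    rw [← hadd, ← hadd, add_comm]
  have hφt : HasFDerivAt (φ t) (fderiv ℝ (φ t) x) (φ 0 x) := by
    rw [hzero]
    exact (differentiable_apply_of_uncurry hφ t x).hasFDerivAt
  refine HasDerivAt.deriv ?_
  rw [hcomm]
  exact hφt.comp_hasDerivAt 0 (hasDerivAt_Xof hφ x)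

theorem fderiv_flow_apply_fderiv_flow_neg (hzero : ∀ x, φ 0 x = x)
    (hadd : ∀ s t x, φ (s + t) x = φ s (φ t x)) (hφ : Differentiable ℝ (Function.uncurry φ))
    (t : ℝ) (x w : Pt d) : fderiv ℝ (φ t) (φ (-t) x) (fderiv ℝ (φ (-t)) x w) = w := by
  have hinv : φ t ∘ φ (-t) = id := funext fun y => by
    rw [Function.comp_apply, ← hadd, add_neg_cancel, hzero, id]
  have hchain := fderiv_comp x (differentiable_apply_of_uncurry hφ t (φ (-t) x))
    (differentiable_apply_of_uncurry hφ (-t) x)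
  rw [hinv, fderiv_id] at hchain
  exact (DFunLike.congr_fun hchain w).symm

theorem iterate_flow_one (hzero : ∀ x, φ 0 x = x) (hadd : ∀ s t x, φ (s + t) x = φ s (φ t x))
    (n : ℕ) : (φ 1)^[n] = φ n := by
  induction n with
  | zero => funext x; simp [hzero]
  | succ n ih =>
    funext x
    rw [Function.iterate_succ_apply', ih, ← hadd]
    push_cast
    ring_nf

end FlowDerivative

section ParallelogramArea

variable {d : ℕ}

theorem pArea_le_norm_mul_norm (v w : Pt d) : pArea v w ≤ ‖v‖ * ‖w‖ := by
  refine Real.sqrt_le_iff.2 ⟨by positivity, ?_⟩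
  nlinarith [sq_nonneg (inner ℝ v w : ℝ)]

theorem pArea_pos {v w : Pt d} (h : LinearIndependent ℝ ![v, w]) : 0 < pArea v w := by
  have hw : ‖w‖ ≠ 0 := norm_ne_zero_iff.2 (h.ne_zero 1)
  have hupper : (inner ℝ v w : ℝ) < ‖v‖ * ‖w‖ := by
    refine inner_lt_norm_mul_iff_real.2 fun heq => hw ?_
    refine (LinearIndependent.pair_iff.1 h ‖w‖ (-‖v‖) ?_).1
    rw [heq, neg_smul, add_neg_cancel]
  have hlower : (inner ℝ (-v) w : ℝ) < ‖-v‖ * ‖w‖ := by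
    refine inner_lt_norm_mul_iff_real.2 fun heq => hw ?_
    refine neg_eq_zero.1 (LinearIndependent.pair_iff.1 h (-‖w‖) (-‖v‖) ?_).1
    rw [neg_smul, ← smul_neg, heq, norm_neg, neg_smul, add_neg_cancel]
  rw [inner_neg_left, norm_neg] at hlower
  exact Real.sqrt_pos.2 (by nlinarith)

end ParallelogramArea

theorem nonpos_of_forall_le_mul_exp_neg {r K lam : ℝ} (hlam : 0 < lam)
    (h : ∀ t > 0, r ≤ K * Real.exp (-lam * t)) : r ≤ 0 := by
  have hdecay : Tendsto (fun t => K * Real.exp (-lam * t)) atTop (𝓝 (K * 0)) :=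
    (Real.tendsto_exp_atBot.comp
      (tendsto_id.const_mul_atTop_of_neg (neg_neg_of_pos hlam))).const_mul K
  rw [mul_zero] at hdecay
  exact ge_of_tendsto hdecay ((eventually_gt_atTop 0).mono h)

theorem le_of_tendsto_log_div_of_mul_exp_le {a : ℕ → ℝ} {c lam L : ℝ} (hc : 0 < c)
    (h : ∀ᶠ n : ℕ in atTop, c * Real.exp (lam * n) ≤ a n)
    (ha : Tendsto (fun n : ℕ => Real.log (a n) / n) atTop (𝓝 L)) : lam ≤ L := by
  have hlower : ∀ᶠ n : ℕ in atTop, Real.log c / n + lam ≤ Real.log (a n) / n := by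
    filter_upwards [h, eventually_gt_atTop 0] with n hn hpos
    have hn' : (0 : ℝ) < n := Nat.cast_pos.2 hpos
    have hlog := Real.log_le_log (by positivity) hn
    rw [Real.log_mul hc.ne' (Real.exp_pos _).ne', Real.log_exp] at hlog
    rw [div_add' _ _ _ hn'.ne', div_le_div_iff_of_pos_right hn']
    linarith
  have hlim : Tendsto (fun n : ℕ => Real.log c / n + lam) atTop (𝓝 (0 + lam)) :=
    (tendsto_const_div_atTop_nhds_zero_nat _).add tendsto_const_nhds
  simpa using le_of_tendsto_of_tendsto hlim ha hlower

namespace SingularHyperbolicAttractor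

variable {d : ℕ} (D : SingularHyperbolicAttractor d)

theorem differentiable_uncurry_φ : Differentiable ℝ (Function.uncurry D.φ) :=
  D.flow_smooth.differentiable two_ne_zero

theorem Xof_φ (t : ℝ) (x : Pt d) : Xof D.φ (D.φ t x) = fderiv ℝ (D.φ t) x (Xof D.φ x) :=
  Xof_apply_flow D.flow_zero D.flow_add D.differentiable_uncurry_φ t x

theorem exists_norm_Xof_le : ∃ M, ∀ y ∈ D.Λ, ‖Xof D.φ y‖ ≤ M :=
  D.compactΛ.exists_bound_of_continuousOn
    (continuous_Xof (D.flow_smooth.of_le one_le_two)).continuousOn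

variable {D}

theorem φ_mem {x : Pt d} (hx : x ∈ D.Λ) (t : ℝ) : D.φ t x ∈ D.Λ :=
  D.invariantΛ t ▸ Set.mem_image_of_mem _ hx

theorem norm_ess_component_le {x s u : Pt d} {M : ℝ} (hx : x ∈ D.Λ)
    (hM : ∀ y ∈ D.Λ, ‖Xof D.φ y‖ ≤ M) (hs : s ∈ D.Ess x) (hu : u ∈ D.Fcu x)
    (hX : Xof D.φ x = s + u) {t : ℝ} (ht : 0 < t) :
    ‖s‖ ≤ D.C * (‖u‖ + M) * Real.exp (-D.lam * t) := by
  set y := D.φ (-t) x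
  set s' := fderiv ℝ (D.φ (-t)) x s
  set u' := fderiv ℝ (D.φ (-t)) x u
  have hy : y ∈ D.Λ := φ_mem hx (-t)
  have hty : D.φ t y = x := by rw [← D.flow_add, add_neg_cancel, D.flow_zero]
  have hs' : s' ∈ D.Ess y := D.inv_Ess x hx (-t) ▸ Submodule.mem_map_of_mem hs
  have hts' : fderiv ℝ (D.φ t) y s' = s :=
    fderiv_flow_apply_fderiv_flow_neg D.flow_zero D.flow_add D.differentiable_uncurry_φ t x s
  have hcontract : ‖s‖ ≤ D.C * Real.exp (-D.lam * t) * ‖s'‖ := by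
    simpa only [hts'] using D.contraction y hy t ht s' hs'
  have hdominate : ‖s‖ * ‖u'‖ ≤ D.C * Real.exp (-D.lam * t) * ‖s'‖ * ‖u‖ := by
    have := D.domination y hy t ht s' hs' u (by rwa [hty])
    rwa [hts', hty] at this
  have hXy : Xof D.φ y = s' + u' := by rw [D.Xof_φ, hX, map_add]
  have hbounded : ‖s'‖ ≤ M + ‖u'‖ := by
    have := norm_sub_le (s' + u') u'
    rw [add_sub_cancel_right, ← hXy] at this
    linarith [hM y hy]
  have hM0 : 0 ≤ M := (norm_nonneg _).trans (hM x hx)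
  set K := D.C * Real.exp (-D.lam * t)
  have hK : 0 < K := mul_pos D.C_pos (Real.exp_pos _)
  rw [mul_right_comm]
  rcases le_or_gt ‖s‖ (K * ‖u‖) with hsmall | hlarge
  · nlinarith
  have hs'bound : ‖s'‖ * (‖s‖ - K * ‖u‖) ≤ ‖s‖ * M := by
    nlinarith [mul_le_mul_of_nonneg_left hbounded (norm_nonneg s)]
  have hsbound : ‖s‖ * (‖s‖ - K * ‖u‖) ≤ ‖s‖ * (K * M) := by
    nlinarith [mul_le_mul_of_nonneg_right hcontract (sub_nonneg.2 hlarge.le)]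
  have hspos : 0 < ‖s‖ := (mul_nonneg hK.le (norm_nonneg u)).trans_lt hlarge
  nlinarith [le_of_mul_le_mul_left hsbound hspos]

theorem Xof_mem_Fcu {x : Pt d} (hx : x ∈ D.Λ) : Xof D.φ x ∈ D.Fcu x := by
  obtain ⟨M, hM⟩ := D.exists_norm_Xof_le
  have hX : Xof D.φ x ∈ D.Ess x ⊔ D.Fcu x := by
    rw [(D.isCompl x hx).sup_eq_top]
    exact Submodule.mem_top
  obtain ⟨s, hs, u, hu, hsu⟩ := Submodule.mem_sup.1 hX
  have hs0 : s = 0 := norm_le_zero_iff.1 <| nonpos_of_forall_le_mul_exp_neg D.lam_pos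
    fun _ ht => norm_ess_component_le hx hM hs hu hsu.symm ht
  rwa [← hsu, hs0, zero_add]

theorem mul_exp_mul_pArea_le {x v : Pt d} {M : ℝ} (hx : x ∈ D.Λ)
    (hM : ∀ y ∈ D.Λ, ‖Xof D.φ y‖ ≤ M) (hv : v ∈ D.Fcu x)
    (hind : LinearIndependent ℝ ![v, Xof D.φ x]) {t : ℝ} (ht : 0 < t) :
    D.C * Real.exp (D.lam * t) * pArea v (Xof D.φ x) ≤ M * ‖fderiv ℝ (D.φ t) x v‖ :=
  calc D.C * Real.exp (D.lam * t) * pArea v (Xof D.φ x)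
      ≤ pArea (fderiv ℝ (D.φ t) x v) (fderiv ℝ (D.φ t) x (Xof D.φ x)) :=
        D.sectional x hx t ht v hv _ (Xof_mem_Fcu hx) hind
    _ ≤ ‖fderiv ℝ (D.φ t) x v‖ * ‖Xof D.φ (D.φ t x)‖ := by
        rw [D.Xof_φ]
        exact pArea_le_norm_mul_norm _ _
    _ ≤ M * ‖fderiv ℝ (D.φ t) x v‖ := by
        rw [mul_comm]
        exact mul_le_mul_of_nonneg_right (hM _ (φ_mem hx t)) (norm_nonneg _)

end SingularHyperbolicAttractor

theorem no_zero_exponent_in_Fcu_transverse_general {d : ℕ} (D : SingularHyperbolicAttractor d)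
    (μ : MeasureTheory.Measure (Pt d))
    (hsupp : μ D.Λᶜ = 0) :
    ∀ᵐ x ∂μ, Xof D.φ x ≠ 0 →
      ¬ ∃ v : Pt d, v ∈ D.Fcu x ∧ v ∉ Submodule.span ℝ {Xof D.φ x} ∧
        Filter.Tendsto
          (fun n : ℕ => Real.log ‖fderiv ℝ ((D.φ 1)^[n]) x v‖ / n)
          Filter.atTop (nhds 0) := by
  filter_upwards [ae_iff.2 hsupp] with x hx hX0
  rintro ⟨v, hv, hvX, hlim⟩
  obtain ⟨M, hM⟩ := D.exists_norm_Xof_le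
  have hMpos : 0 < M := (norm_pos_iff.2 hX0).trans_le (hM x hx)
  have hind : LinearIndependent ℝ ![v, Xof D.φ x] :=
    LinearIndependent.pair_symm_iff.2 <| (LinearIndependent.pair_iff' hX0).2 fun a ha =>
      hvX (ha ▸ Submodule.smul_mem _ a (Submodule.mem_span_singleton_self _))
  have hgrowth : ∀ᶠ n : ℕ in atTop, D.C * pArea v (Xof D.φ x) / M * Real.exp (D.lam * n) ≤
      ‖fderiv ℝ ((D.φ 1)^[n]) x v‖ := by
    filter_upwards [eventually_gt_atTop 0] with n hn
    rw [iterate_flow_one D.flow_zero D.flow_add, div_mul_eq_mul_div, div_le_iff₀' hMpos,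
      mul_right_comm]
    exact D.mul_exp_mul_pArea_le hx hM hv hind (Nat.cast_pos.2 hn)
  have hlam := le_of_tendsto_log_div_of_mul_exp_le
    (div_pos (mul_pos D.C_pos (pArea_pos hind)) hMpos) hgrowth hlim
  exact D.lam_pos.not_ge hlam

/-- For an ergodic invariant measure on a singular hyperbolic attractor not
supported on the set of singularities, at a.e. (regular) point there is no vector in
`F^{cu}(x) \ ⟨X(x)⟩` whose Lyapunov exponent is zero. -/
theorem no_zero_exponent_in_Fcu_transverse {d : ℕ} (D : SingularHyperbolicAttractor d)
    (μ : MeasureTheory.Measure (Pt d))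
    (herg : Ergodic (D.φ 1) μ) (hprob : MeasureTheory.IsProbabilityMeasure μ)
    (hsupp : μ D.Λᶜ = 0) (hns : μ D.Sing ≠ 1) :
    ∀ᵐ x ∂μ, Xof D.φ x ≠ 0 →
      ¬ ∃ v : Pt d, v ∈ D.Fcu x ∧ v ∉ Submodule.span ℝ {Xof D.φ x} ∧
        Filter.Tendsto
          (fun n : ℕ => Real.log ‖fderiv ℝ ((D.φ 1)^[n]) x v‖ / n)
          Filter.atTop (nhds 0) :=
  no_zero_exponent_in_Fcu_transverse_general D μ hsupp
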